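/- arXiv:2406.00064 — 2 statements merged into one kernel-verified Lean document; each statement's English description precedes it below -/
import Mathlib

section
/- If r is a positive odd integer, then ∫_0^{π/2} ln(1 + L_{2r}·tan² x + tan⁴ x) dx = π·ln(√5·F_r + 2), and if r is a positive even integer, then ∫_0^{π/2} ln(1 + L_{2r}·tan² x + tan⁴ x) dx = π·ln(L_r + 2). -/
open Real MeasureTheory intervalIntegral
open Set Filter Topology

noncomputable def phi : ℝ := (1 + Real.sqrt 5) / 2
noncomputable def psi : ℝ := (1 - Real.sqrt 5) / 2
noncomputable def fibR (n : ℤ) : ℝ := (phi ^ n - psi ^ n) / Real.sqrt 5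
noncomputable def lucR (n : ℤ) : ℝ := phi ^ n + psi ^ n

-- Lemma 1: ∫_{Ioi 0} (1+c t²)⁻¹ = π/(2√c)
lemma integral_inv_one_add_mul_sq {c : ℝ} (hc : 0 < c) :
    ∫ t in Ioi (0:ℝ), (1 + c * t ^ 2)⁻¹ = π / (2 * Real.sqrt c) := by
  have hsc : 0 < Real.sqrt c := Real.sqrt_pos.mpr hc
  have hderiv : ∀ x ∈ Ici (0:ℝ),
      HasDerivAt (fun t => Real.arctan (Real.sqrt c * t) / Real.sqrt c)
        ((1 + c * x ^ 2)⁻¹) x := by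
    intro x _
    have h1 : HasDerivAt (fun t : ℝ => Real.sqrt c * t) (Real.sqrt c) x := by
      simpa using (hasDerivAt_id x).const_mul (Real.sqrt c)
    have h2 := (Real.hasDerivAt_arctan (Real.sqrt c * x)).comp x h1
    have h3 := h2.div_const (Real.sqrt c)
    refine h3.congr_deriv ?_
    have : Real.sqrt c * x * (Real.sqrt c * x) = c * x ^ 2 := by
      have := Real.sq_sqrt hc.le
      nlinarith [Real.sq_sqrt hc.le]
    rw [mul_pow, Real.sq_sqrt hc.le]
    field_simp
  have hnonneg : ∀ x ∈ Ioi (0:ℝ), 0 ≤ (1 + c * x ^ 2)⁻¹ := by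
    intro x _; positivity
  have htop : Tendsto (fun t => Real.arctan (Real.sqrt c * t) / Real.sqrt c) atTop
      (𝓝 ((π/2) / Real.sqrt c)) := by
    apply Tendsto.div_const
    exact (tendsto_nhds_of_tendsto_nhdsWithin Real.tendsto_arctan_atTop).comp
      (tendsto_atTop_atTop_of_monotone (fun a b hab => by nlinarith) (fun b => ⟨b / Real.sqrt c, by field_simp; exact le_rfl⟩))
  have := integral_Ioi_of_hasDerivAt_of_nonneg' hderiv hnonneg htop
  rw [this]
  simp [Real.arctan_zero]
  ring

lemma integrableOn_inv_one_add_mul_sq {c : ℝ} (hc : 0 < c) :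
    IntegrableOn (fun t : ℝ => (1 + c * t ^ 2)⁻¹) (Ioi 0) := by
  have hsc : 0 < Real.sqrt c := Real.sqrt_pos.mpr hc
  have hderiv : ∀ x ∈ Ici (0:ℝ),
      HasDerivAt (fun t => Real.arctan (Real.sqrt c * t) / Real.sqrt c)
        ((1 + c * x ^ 2)⁻¹) x := by
    intro x _
    have h1 : HasDerivAt (fun t : ℝ => Real.sqrt c * t) (Real.sqrt c) x := by
      simpa using (hasDerivAt_id x).const_mul (Real.sqrt c)
    have h2 := (Real.hasDerivAt_arctan (Real.sqrt c * x)).comp x h1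
    have h3 := h2.div_const (Real.sqrt c)
    refine h3.congr_deriv ?_
    rw [mul_pow, Real.sq_sqrt hc.le]
    field_simp
  have htop : Tendsto (fun t => Real.arctan (Real.sqrt c * t) / Real.sqrt c) atTop
      (𝓝 ((π/2) / Real.sqrt c)) := by
    apply Tendsto.div_const
    exact (tendsto_nhds_of_tendsto_nhdsWithin Real.tendsto_arctan_atTop).comp
      (tendsto_atTop_atTop_of_monotone (fun a b hab => by nlinarith) (fun b => ⟨b / Real.sqrt c, by field_simp; exact le_rfl⟩))
  exact integrableOn_Ioi_deriv_of_nonneg' hderiv (fun x _ => by positivity) htop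

lemma integrableOn_frac {s : ℝ} (hs : 0 < s) :
    IntegrableOn (fun t : ℝ => t ^ 2 / ((1 + s * t ^ 2) * (1 + t ^ 2))) (Ioi 0) := by
  apply Integrable.mono' ((integrableOn_inv_one_add_mul_sq one_pos).const_mul s⁻¹)
  · apply Continuous.aestronglyMeasurable
    apply Continuous.div (continuous_pow 2)
    · continuity
    · intro t; positivity
  · filter_upwards with t
    have h1 : (0:ℝ) < 1 + s * t ^ 2 := by positivity
    have h2 : (0:ℝ) < 1 + t ^ 2 := by positivity
    rw [Real.norm_eq_abs, abs_of_nonneg (by positivity)]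
    rw [div_le_iff₀ (by positivity)]
    have : t ^ 2 ≤ s⁻¹ * (1 + s * t ^ 2) := by
      rw [mul_add, ← mul_assoc, inv_mul_cancel₀ hs.ne', one_mul]
      nlinarith [inv_pos.mpr hs]
    calc t ^ 2 ≤ s⁻¹ * (1 + s * t ^ 2) := this
      _ = s⁻¹ * (1 + 1 * t ^ 2)⁻¹ * ((1 + s * t ^ 2) * (1 + t ^ 2)) := by
          rw [one_mul]; field_simp
  
lemma integral_frac {s : ℝ} (hs : 0 < s) :
    ∫ t in Ioi (0:ℝ), t ^ 2 / ((1 + s * t ^ 2) * (1 + t ^ 2))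
      = π / (2 * Real.sqrt s * (1 + Real.sqrt s)) := by
  have hu : 0 < Real.sqrt s := Real.sqrt_pos.mpr hs
  have hu2 : Real.sqrt s ^ 2 = s := Real.sq_sqrt hs.le
  by_cases h1 : s = 1
  · subst h1
    -- antiderivative (arctan t - t/(1+t²))/2
    have hderiv : ∀ x ∈ Ici (0:ℝ),
        HasDerivAt (fun t => (Real.arctan t - t / (1 + t ^ 2)) / 2)
          (x ^ 2 / ((1 + 1 * x ^ 2) * (1 + x ^ 2))) x := by
      intro x _
      have h2 : (0:ℝ) < 1 + x ^ 2 := by positivity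
      have ha := Real.hasDerivAt_arctan x
      have hb : HasDerivAt (fun t : ℝ => t / (1 + t ^ 2))
          ((1 * (1 + x ^ 2) - x * (2 * x)) / (1 + x ^ 2) ^ 2) x := by
        have := (hasDerivAt_id x).div
          (((hasDerivAt_pow 2 x).const_add 1)) h2.ne'
        exact this.congr_deriv (by norm_num)
      have := ((ha.sub hb).div_const 2)
      refine this.congr_deriv ?_
      field_simp
      ring
    have htop : Tendsto (fun t : ℝ => (Real.arctan t - t / (1 + t ^ 2)) / 2) atTop
        (𝓝 ((π / 2 - 0) / 2)) := by
      apply Tendsto.div_const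
      apply Tendsto.sub (tendsto_nhds_of_tendsto_nhdsWithin Real.tendsto_arctan_atTop)
      have heq : (fun t : ℝ => t / (1 + t ^ 2)) =ᶠ[atTop] fun t => (t⁻¹ + t)⁻¹ := by
        filter_upwards [eventually_gt_atTop 0] with t ht
        rw [eq_comm, inv_eq_iff_eq_inv, inv_div]
        field_simp
      rw [tendsto_congr' heq]
      apply Tendsto.inv_tendsto_atTop
      apply tendsto_atTop_mono' atTop _ tendsto_id
      filter_upwards [eventually_gt_atTop 0] with t ht
      exact le_add_of_nonneg_left (by positivity)
    have := integral_Ioi_of_hasDerivAt_of_nonneg' hderiv (fun x _ => by positivity) htop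
    rw [this]
    simp [Real.sqrt_one]
    ring
  · -- s ≠ 1 : partial fractions
    have key : ∀ t : ℝ, t ^ 2 / ((1 + s * t ^ 2) * (1 + t ^ 2))
        = (1 - s)⁻¹ * ((1 + s * t ^ 2)⁻¹ - (1 + 1 * t ^ 2)⁻¹) := by
      intro t
      have h2 : (0:ℝ) < 1 + s * t ^ 2 := by positivity
      have h3 : (0:ℝ) < 1 + t ^ 2 := by positivity
      have hs1 : (1:ℝ) - s ≠ 0 := sub_ne_zero.mpr (Ne.symm h1)
      field_simp
      ring
    simp_rw [key]
    rw [MeasureTheory.integral_const_mul, integral_sub (integrableOn_inv_one_add_mul_sq hs)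
      (integrableOn_inv_one_add_mul_sq one_pos),
      integral_inv_one_add_mul_sq hs, integral_inv_one_add_mul_sq one_pos]
    have hu1 : Real.sqrt s ≠ 1 := by
      intro h; apply h1; rw [← hu2, h]; norm_num
    rw [Real.sqrt_one]
    have h1s : 1 - s ≠ 0 := sub_ne_zero.mpr (Ne.symm h1)
    field_simp
    linear_combination (-1) * hu2

lemma log_one_add_sq_le (t : ℝ) :
    Real.log (1 + t ^ 2) ≤ 4 * (1 + t ^ 2) ^ (-(3:ℝ)/4) * (1 + t ^ 2) := by
  have h : (0:ℝ) < 1 + t ^ 2 := by positivity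
  have h4 : Real.log (1 + t ^ 2) = 4 * Real.log ((1 + t ^ 2) ^ ((1:ℝ)/4)) := by
    rw [Real.log_rpow h]; ring
  have h5 : Real.log ((1 + t ^ 2) ^ ((1:ℝ)/4)) ≤ (1 + t ^ 2) ^ ((1:ℝ)/4) - 1 :=
    Real.log_le_sub_one_of_pos (Real.rpow_pos_of_pos h _)
  have h6 : 4 * (1 + t^2) ^ (-(3:ℝ)/4) * (1 + t ^ 2) = 4 * (1 + t^2) ^ ((1:ℝ)/4) := by
    rw [mul_assoc]
    congr 1
    rw [show ((1:ℝ)/4) = (-(3:ℝ)/4) + 1 by norm_num, Real.rpow_add h, Real.rpow_one]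
  rw [h4, h6]
  nlinarith [Real.rpow_pos_of_pos h ((1:ℝ)/4)]

lemma integrableOn_logweight :
    IntegrableOn (fun t : ℝ => Real.log (1 + t ^ 2) / (1 + t ^ 2)) (Ioi 0) := by
  have hint : Integrable (fun t : ℝ => 4 * ((1:ℝ) + t ^ 2) ^ (-(3:ℝ)/4)) := by
    have := (integrable_rpow_neg_one_add_norm_sq (E := ℝ) (μ := volume)
      (r := (3:ℝ)/2) (by norm_num)).const_mul 4
    convert this using 3 with x
    norm_num
  apply Integrable.mono' (hint.integrableOn)
  · apply Continuous.aestronglyMeasurable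
    apply Continuous.div
    · exact (continuous_const.add (continuous_pow 2)).log (fun t => (by positivity : (0:ℝ) < 1 + t ^ 2).ne')
    · continuity
    · intro t; positivity
  · filter_upwards with t
    have h : (0:ℝ) < 1 + t ^ 2 := by positivity
    have hl : 0 ≤ Real.log (1 + t ^ 2) := Real.log_nonneg (by nlinarith)
    rw [Real.norm_eq_abs, abs_of_nonneg (by positivity), div_le_iff₀ h]
    have := log_one_add_sq_le t
    linarith

noncomputable def Kf (a : ℝ) : ℝ := ∫ t in Ioi (0:ℝ), Real.log (1 + a * t ^ 2) / (1 + t ^ 2)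

lemma F_nonneg {a : ℝ} (ha : 0 ≤ a) (t : ℝ) :
    0 ≤ Real.log (1 + a * t ^ 2) / (1 + t ^ 2) := by
  apply div_nonneg (Real.log_nonneg (by nlinarith)) (by positivity)

lemma F_le {a : ℝ} (ha : 0 ≤ a) (t : ℝ) :
    Real.log (1 + a * t ^ 2) / (1 + t ^ 2)
      ≤ Real.log (1 + a) * (1 + t ^ 2)⁻¹ + Real.log (1 + t ^ 2) / (1 + t ^ 2) := by
  have h2 : (0:ℝ) < 1 + t ^ 2 := by positivity
  have hle : Real.log (1 + a * t ^ 2) ≤ Real.log (1 + a) + Real.log (1 + t ^ 2) := by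
    rw [← Real.log_mul (by positivity) (by positivity)]
    apply Real.log_le_log (by positivity)
    nlinarith
  rw [div_le_iff₀ h2]
  have hla : 0 ≤ Real.log (1 + a) := Real.log_nonneg (by linarith)
  have hlt : 0 ≤ Real.log (1 + t ^ 2) := Real.log_nonneg (by nlinarith)
  calc Real.log (1 + a * t ^ 2) ≤ Real.log (1 + a) + Real.log (1 + t ^ 2) := hle
    _ = (Real.log (1 + a) * (1 + t^2)⁻¹ + Real.log (1+t^2) / (1+t^2)) * (1 + t ^ 2) := by
        field_simp
  
lemma F_meas (a : ℝ) :
    AEStronglyMeasurable (fun t : ℝ => Real.log (1 + a * t ^ 2) / (1 + t ^ 2))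
      (volume.restrict (Ioi 0)) := by
  apply Measurable.aestronglyMeasurable
  exact (Real.measurable_log.comp (by measurability)).div (by measurability)

lemma integrableOn_F {a : ℝ} (ha : 0 ≤ a) :
    IntegrableOn (fun t : ℝ => Real.log (1 + a * t ^ 2) / (1 + t ^ 2)) (Ioi 0) := by
  apply Integrable.mono'
    (((integrableOn_inv_one_add_mul_sq one_pos).const_mul (Real.log (1+a))).add
      integrableOn_logweight)
  · exact F_meas a
  · filter_upwards with t
    rw [Real.norm_eq_abs, abs_of_nonneg (F_nonneg ha t)]
    simpa using F_le ha t

set_option maxHeartbeats 1000000 in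
lemma hasDerivAt_Kf {a : ℝ} (ha : 0 < a) :
    HasDerivAt Kf (π / (2 * Real.sqrt a * (1 + Real.sqrt a))) a := by
  have ha2 : 0 < a / 2 := by linarith
  have hF'meas : AEStronglyMeasurable
      (fun t : ℝ => t ^ 2 / ((1 + a * t ^ 2) * (1 + t ^ 2))) (volume.restrict (Ioi 0)) := by
    apply Continuous.aestronglyMeasurable
    apply Continuous.div (continuous_pow 2) (by continuity)
    intro t
    have : (0:ℝ) < 1 + a * t ^ 2 := by positivity
    positivity
  have hbound : ∀ᵐ t ∂(volume.restrict (Ioi (0:ℝ))), ∀ x ∈ Metric.ball a (a/2),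
      ‖t ^ 2 / ((1 + x * t ^ 2) * (1 + t ^ 2))‖
        ≤ t ^ 2 / ((1 + (a/2) * t ^ 2) * (1 + t ^ 2)) := by
    filter_upwards with t x hx
    rw [Metric.mem_ball, Real.dist_eq] at hx
    have hxa : a / 2 < x := by cases abs_lt.mp hx; linarith
    have h1 : (0:ℝ) < 1 + (a/2) * t ^ 2 := by positivity
    have h2 : (0:ℝ) < 1 + x * t ^ 2 := by nlinarith [sq_nonneg t]
    have h3 : (0:ℝ) < 1 + t ^ 2 := by positivity
    rw [Real.norm_eq_abs, abs_of_nonneg (by positivity)]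
    apply div_le_div_of_nonneg_left (sq_nonneg t) (by positivity)
    apply mul_le_mul_of_nonneg_right _ h3.le
    nlinarith [sq_nonneg t]
  have hdiff : ∀ᵐ t ∂(volume.restrict (Ioi (0:ℝ))), ∀ x ∈ Metric.ball a (a/2),
      HasDerivAt (fun y : ℝ => Real.log (1 + y * t ^ 2) / (1 + t ^ 2))
        (t ^ 2 / ((1 + x * t ^ 2) * (1 + t ^ 2))) x := by
    filter_upwards with t x hx
    rw [Metric.mem_ball, Real.dist_eq] at hx
    have hxa : a / 2 < x := by cases abs_lt.mp hx; linarith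
    have h2 : (0:ℝ) < 1 + x * t ^ 2 := by nlinarith [sq_nonneg t]
    have h3 : (0:ℝ) < 1 + t ^ 2 := by positivity
    have hinner : HasDerivAt (fun y : ℝ => 1 + y * t ^ 2) (t ^ 2) x := by
      simpa using ((hasDerivAt_id x).mul_const (t ^ 2)).const_add 1
    have hlog := (Real.hasDerivAt_log h2.ne').comp x hinner
    have hd := hlog.div_const (1 + t ^ 2)
    refine hd.congr_deriv ?_
    field_simp
  have hFint : Integrable (fun t : ℝ => Real.log (1 + a * t ^ 2) / (1 + t ^ 2))
      (volume.restrict (Ioi 0)) := integrableOn_F ha.le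
  have hbint : Integrable (fun t : ℝ => t ^ 2 / ((1 + (a/2) * t ^ 2) * (1 + t ^ 2)))
      (volume.restrict (Ioi 0)) := integrableOn_frac ha2
  have key := _root_.hasDerivAt_integral_of_dominated_loc_of_deriv_le
    (𝕜 := ℝ) (μ := volume.restrict (Ioi (0:ℝ)))
    (F := fun (x : ℝ) (t : ℝ) => Real.log (1 + x * t ^ 2) / (1 + t ^ 2))
    (F' := fun (x : ℝ) (t : ℝ) => t ^ 2 / ((1 + x * t ^ 2) * (1 + t ^ 2)))
    (x₀ := a) (bound := fun t : ℝ => t ^ 2 / ((1 + (a/2) * t ^ 2) * (1 + t ^ 2)))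
    (s := Metric.ball a (a/2)) (Metric.ball_mem_nhds a ha2) (Eventually.of_forall fun x => F_meas x)
    hFint hF'meas hbound hbint hdiff
  rw [integral_frac ha] at key
  exact key.2



lemma hasDerivAt_L {a : ℝ} (ha : 0 < a) :
    HasDerivAt (fun x : ℝ => π * Real.log (1 + Real.sqrt x))
      (π / (2 * Real.sqrt a * (1 + Real.sqrt a))) a := by
  have hsa : 0 < Real.sqrt a := Real.sqrt_pos.mpr ha
  have hs : HasDerivAt (fun x : ℝ => 1 + Real.sqrt x) (1 / (2 * Real.sqrt a)) a :=
    (Real.hasDerivAt_sqrt ha.ne').const_add 1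
  have h1 : (0:ℝ) < 1 + Real.sqrt a := by positivity
  have hlog := (Real.hasDerivAt_log h1.ne').comp a hs
  have := hlog.const_mul π
  refine this.congr_deriv ?_
  field_simp

lemma continuousL : Tendsto (fun x : ℝ => π * Real.log (1 + Real.sqrt x)) (𝓝[>] 0) (𝓝 0) := by
  have h : ContinuousAt (fun x : ℝ => π * Real.log (1 + Real.sqrt x)) 0 := by
    apply ContinuousAt.mul continuousAt_const
    apply ContinuousAt.log
    · exact (Real.continuous_sqrt.continuousAt).const_add 1
    · simp
  have ht := h.tendsto
  rw [show π * Real.log (1 + Real.sqrt 0) = 0 by simp] at ht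
  exact ht.mono_left nhdsWithin_le_nhds

lemma Kf_tendsto_zero : Tendsto Kf (𝓝[>] (0:ℝ)) (𝓝 0) := by
  have hmeas : ∀ᶠ a in 𝓝[>] (0:ℝ), AEStronglyMeasurable
      (fun t : ℝ => Real.log (1 + a * t ^ 2) / (1 + t ^ 2)) (volume.restrict (Ioi 0)) :=
    Eventually.of_forall fun a => F_meas a
  have hbnd : ∀ᶠ a in 𝓝[>] (0:ℝ), ∀ᵐ t ∂(volume.restrict (Ioi (0:ℝ))),
      ‖Real.log (1 + a * t ^ 2) / (1 + t ^ 2)‖ ≤ Real.log (1 + t ^ 2) / (1 + t ^ 2) := by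
    filter_upwards [Ioc_mem_nhdsGT_of_mem (Set.mem_Ico.mpr ⟨le_rfl, one_pos⟩)] with a ha
    filter_upwards with t
    have h2 : (0:ℝ) < 1 + t ^ 2 := by positivity
    rw [Real.norm_eq_abs, abs_of_nonneg (F_nonneg ha.1.le t)]
    apply (div_le_div_iff_of_pos_right h2).mpr
    apply Real.log_le_log (by nlinarith [mul_nonneg ha.1.le (sq_nonneg t)])
    nlinarith [ha.1, ha.2, sq_nonneg t]
  have hlim : ∀ᵐ t ∂(volume.restrict (Ioi (0:ℝ))),
      Tendsto (fun a : ℝ => Real.log (1 + a * t ^ 2) / (1 + t ^ 2)) (𝓝[>] 0)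
        (𝓝 ((fun _ : ℝ => (0:ℝ)) t)) := by
    filter_upwards with t
    have hc : ContinuousAt (fun a : ℝ => Real.log (1 + a * t ^ 2) / (1 + t ^ 2)) 0 := by
      apply ContinuousAt.div_const
      apply ContinuousAt.log
      · exact (continuousAt_id.mul_const _).const_add 1
      · simp
    have ht := hc.tendsto
    rw [show Real.log (1 + 0 * t ^ 2) / (1 + t ^ 2) = 0 by simp] at ht
    exact ht.mono_left nhdsWithin_le_nhds
  have h := MeasureTheory.tendsto_integral_filter_of_dominated_convergence
    (μ := volume.restrict (Ioi (0:ℝ))) (f := fun _ : ℝ => (0:ℝ))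
    (F := fun (a : ℝ) (t : ℝ) => Real.log (1 + a * t ^ 2) / (1 + t ^ 2))
    (bound := fun t => Real.log (1 + t ^ 2) / (1 + t ^ 2))
    hmeas hbnd integrableOn_logweight hlim
  simp only [integral_zero] at h
  exact h

lemma Kf_eq {a : ℝ} (ha : 0 < a) : Kf a = π * Real.log (1 + Real.sqrt a) := by
  set D : ℝ → ℝ := fun x => Kf x - π * Real.log (1 + Real.sqrt x) with hD
  have hDconst : ∀ x, 0 < x → x < a → D x = D a := by
    intro x hx hxa
    have hderiv : ∀ y ∈ uIcc x a, HasDerivAt D 0 y := by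
      intro y hy
      have hy0 : 0 < y := lt_of_lt_of_le hx (by
        rcases Set.mem_uIcc.mp hy with h | h
        · exact h.1
        · linarith [h.1])
      have := (hasDerivAt_Kf hy0).sub (hasDerivAt_L hy0)
      exact this.congr_deriv (sub_self _)
    have := intervalIntegral.integral_eq_sub_of_hasDerivAt hderiv
      (intervalIntegrable_const)
    simp at this
    linarith
  have hDtend : Tendsto D (𝓝[>] (0:ℝ)) (𝓝 0) := by
    simpa using Kf_tendsto_zero.sub continuousL
  have hconst : Tendsto D (𝓝[>] (0:ℝ)) (𝓝 (D a)) := by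
    apply Tendsto.congr' _ tendsto_const_nhds
    filter_upwards [Ioo_mem_nhdsGT_of_mem (Set.mem_Ico.mpr ⟨le_rfl, ha⟩)] with x hx
    exact (hDconst x hx.1 hx.2).symm
  have : D a = 0 := tendsto_nhds_unique hconst hDtend
  have := this
  simp only [hD] at this
  linarith




lemma sqrt5_pos : (0:ℝ) < Real.sqrt 5 := Real.sqrt_pos.mpr (by norm_num)
lemma phi_pos : (0:ℝ) < phi := by
  unfold phi; positivity
lemma psi_eq : psi = -phi⁻¹ := by
  have h5 : Real.sqrt 5 ^ 2 = 5 := Real.sq_sqrt (by norm_num)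
  have hphi : phi ≠ 0 := phi_pos.ne'
  field_simp [psi, phi]
  simp only [psi, phi]
  nlinarith [h5]

-- change of variables
lemma cov (g : ℝ → ℝ) :
    ∫ x in (0:ℝ)..(π/2), g (Real.tan x) = ∫ t in Ioi (0:ℝ), (1 + t ^ 2)⁻¹ * g t := by
  have himg : Real.arctan '' Ioi 0 = Ioo 0 (π/2) := by
    ext x
    constructor
    · rintro ⟨t, ht, rfl⟩
      refine ⟨?_, Real.arctan_lt_pi_div_two t⟩
      rw [← Real.arctan_zero]
      exact Real.arctan_strictMono ht
    · rintro ⟨hx0, hx2⟩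
      exact ⟨Real.tan x, Real.tan_pos_of_pos_of_lt_pi_div_two hx0 hx2,
        Real.arctan_tan (by linarith [Real.pi_pos]) hx2⟩
  rw [intervalIntegral.integral_of_le (by positivity), MeasureTheory.integral_Ioc_eq_integral_Ioo,
    ← himg]
  rw [integral_image_eq_integral_abs_deriv_smul measurableSet_Ioi
    (fun t _ => (Real.hasDerivAt_arctan t).hasDerivWithinAt) Real.arctan_injective.injOn
    (fun x => g (Real.tan x))]
  apply setIntegral_congr_fun measurableSet_Ioi
  intro t _
  have h2 : (0:ℝ) < 1 + t ^ 2 := by positivity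
  simp only [Real.tan_arctan, smul_eq_mul, one_div, abs_of_pos (show (0:ℝ) < (1+t^2)⁻¹ by positivity)]


lemma split_int {A B : ℝ} (hA : 0 < A) (hB : 0 < B) (hAB : A * B = 1) :
    ∫ t in Ioi (0:ℝ), (1 + t ^ 2)⁻¹ * Real.log (1 + (A + B) * t ^ 2 + t ^ 4)
      = Kf A + Kf B := by
  have heq : ∀ t : ℝ, (1 + t ^ 2)⁻¹ * Real.log (1 + (A + B) * t ^ 2 + t ^ 4)
      = Real.log (1 + A * t ^ 2) / (1 + t ^ 2) + Real.log (1 + B * t ^ 2) / (1 + t ^ 2) := by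
    intro t
    have h1 : (0:ℝ) < 1 + A * t ^ 2 := by positivity
    have h2 : (0:ℝ) < 1 + B * t ^ 2 := by positivity
    have hfac : 1 + (A + B) * t ^ 2 + t ^ 4 = (1 + A * t ^ 2) * (1 + B * t ^ 2) := by
      have : A * B * t ^ 4 = t ^ 4 := by rw [hAB, one_mul]
      nlinarith [this]
    rw [hfac, Real.log_mul h1.ne' h2.ne', ← add_div, inv_mul_eq_div]
  simp_rw [heq]
  rw [MeasureTheory.integral_add (integrableOn_F hA.le) (integrableOn_F hB.le)]
  rfl

theorem stmt14 (r : ℤ) (hr : 0 < r) :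
    (Odd r →
      ∫ x in (0 : ℝ)..(Real.pi / 2),
          Real.log (1 + lucR (2 * r) * Real.tan x ^ 2 + Real.tan x ^ 4) =
        Real.pi * Real.log (Real.sqrt 5 * fibR r + 2)) ∧
    (Even r →
      ∫ x in (0 : ℝ)..(Real.pi / 2),
          Real.log (1 + lucR (2 * r) * Real.tan x ^ 2 + Real.tan x ^ 4) =
        Real.pi * Real.log (lucR r + 2)) := by
  have hphi := phi_pos
  have hphine : phi ≠ 0 := hphi.ne'
  set A : ℝ := phi ^ (2 * r) with hA
  set B : ℝ := phi ^ (-(2 * r)) with hB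
  have hApos : 0 < A := zpow_pos hphi _
  have hBpos : 0 < B := zpow_pos hphi _
  have hpsi2r : psi ^ (2 * r) = B := by
    rw [psi_eq, Even.neg_zpow (even_two_mul r), inv_zpow, ← zpow_neg]
  have hAB : A * B = 1 := by
    rw [hA, hB, ← zpow_add₀ hphine, add_neg_cancel, zpow_zero]
  have hluc : lucR (2 * r) = A + B := by rw [lucR, hpsi2r]
  have hsqrtA : Real.sqrt A = phi ^ r := by
    rw [hA, show 2 * r = r * 2 from mul_comm _ _, zpow_mul,
      show ((2:ℤ)) = ((2:ℕ):ℤ) by norm_num, zpow_natCast,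
      Real.sqrt_sq (zpow_nonneg hphi.le r)]
  have hsqrtB : Real.sqrt B = phi ^ (-r) := by
    rw [hB, show -(2 * r) = (-r) * 2 by ring, zpow_mul,
      show ((2:ℤ)) = ((2:ℕ):ℤ) by norm_num, zpow_natCast,
      Real.sqrt_sq (zpow_nonneg hphi.le (-r))]
  have hprod : phi ^ r * phi ^ (-r) = 1 := by
    rw [← zpow_add₀ hphine, add_neg_cancel, zpow_zero]
  have hrpos : (0:ℝ) < phi ^ r := zpow_pos hphi _
  have hrneg : (0:ℝ) < phi ^ (-r) := zpow_pos hphi _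
  have hmain : ∫ x in (0 : ℝ)..(π / 2),
      Real.log (1 + lucR (2 * r) * Real.tan x ^ 2 + Real.tan x ^ 4)
      = π * Real.log (phi ^ r + phi ^ (-r) + 2) := by
    have hc := cov (fun t => Real.log (1 + lucR (2 * r) * t ^ 2 + t ^ 4))
    rw [hc, hluc, split_int hApos hBpos hAB, Kf_eq hApos, Kf_eq hBpos, hsqrtA, hsqrtB,
      ← mul_add, ← Real.log_mul (by positivity) (by positivity)]
    congr 2
    nlinarith [hprod]
  constructor
  · intro hodd
    have harg : Real.sqrt 5 * fibR r + 2 = phi ^ r + phi ^ (-r) + 2 := by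
      rw [fibR, psi_eq, Odd.neg_zpow hodd, inv_zpow, ← zpow_neg]
      field_simp
      ring
    rw [hmain, harg]
  · intro heven
    have harg : lucR r + 2 = phi ^ r + phi ^ (-r) + 2 := by
      rw [lucR, psi_eq, Even.neg_zpow heven, inv_zpow, ← zpow_neg]
    rw [hmain, harg]
end

section
/- If r is a positive odd integer, then ∫_0^{π/2} tan² x / (1 + L_{2r}·tan² x + tan⁴ x) dx = (π/2) · 1/( √5·F_r·(√5·F_r + 2) ), and if r is a positive even integer, then this integral equals (π/2) · 1/( L_r·(L_r + 2) ). -/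
open Real MeasureTheory intervalIntegral

open Filter Topology Set

noncomputable def Kc (u : ℝ) : ℝ := u ^ 2 / (u ^ 2 - 1) ^ 2
noncomputable def Bc (u : ℝ) : ℝ := -u ^ 3 / ((1 - u ^ 2) * (1 - u ^ 4))
noncomputable def Cc (u : ℝ) : ℝ := -u ^ 3 / ((u ^ 2 - 1) * (u ^ 4 - 1))
noncomputable def Fa (u : ℝ) (x : ℝ) : ℝ :=
  Kc u * x + (Bc u * Real.arctan (Real.tan x / u) + Cc u * Real.arctan (Real.tan x / u⁻¹))

lemma basic_facts (u : ℝ) (hu : 1 < u) :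
    u ≠ 0 ∧ 0 < u⁻¹ ∧ u⁻¹ < 1 ∧ (u ^ 2 - 1) ≠ 0 ∧ (u ^ 4 - 1) ≠ 0 ∧
      (1 - u ^ 2) ≠ 0 ∧ (1 - u ^ 4) ≠ 0 ∧ 2 < u ^ 2 + (u⁻¹) ^ 2 := by
  have hu0 : (0 : ℝ) < u := lt_trans zero_lt_one hu
  have hu0' : u ≠ 0 := hu0.ne'
  have hv0 : (0 : ℝ) < u⁻¹ := inv_pos.2 hu0
  have hmul : u * u⁻¹ = 1 := mul_inv_cancel₀ hu0'
  have hv1 : u⁻¹ < 1 := by nlinarith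
  have hvu : u⁻¹ < u := lt_trans hv1 hu
  have ha2 : (u ^ 2 + (u⁻¹) ^ 2) - 2 = (u - u⁻¹) ^ 2 := by
    field_simp
    ring
  have ha2pos : 0 < (u ^ 2 + (u⁻¹) ^ 2) - 2 := by
    rw [ha2]; exact pow_pos (sub_pos.2 hvu) 2
  refine ⟨hu0', hv0, hv1, ?_, ?_, ?_, ?_, by linarith⟩
  · nlinarith
  · nlinarith
  · nlinarith
  · nlinarith

lemma pf_ident (u s : ℝ) (hu : 1 < u) :
    s ^ 2 / (1 + (u ^ 2 + (u⁻¹) ^ 2) * s ^ 2 + s ^ 4) =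
      Kc u * 1 +
        (Bc u * (1 / (1 + (s / u) ^ 2) * ((1 + s ^ 2) / u)) +
          Cc u * (1 / (1 + (s / u⁻¹) ^ 2) * ((1 + s ^ 2) / u⁻¹))) := by
  obtain ⟨hu0', hv0, hv1, h21, h41, h12, h14, ha⟩ := basic_facts u hu
  have hden : 1 + (u ^ 2 + (u⁻¹) ^ 2) * s ^ 2 + s ^ 4 ≠ 0 := by
    have h2 : (0:ℝ) ≤ s ^ 2 := sq_nonneg s
    have h4 : (0:ℝ) ≤ s ^ 4 := by positivity
    nlinarith
  have h1t : 1 + (s / u) ^ 2 ≠ 0 := by positivity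
  have h2t : 1 + (s / u⁻¹) ^ 2 ≠ 0 := by positivity
  rw [Kc, Bc, Cc]
  field_simp
  ring

lemma const_ident (u : ℝ) (hu : 1 < u) :
    Kc u + Bc u + Cc u = 1 / ((u + u⁻¹) * (u + u⁻¹ + 2)) := by
  obtain ⟨hu0', hv0, hv1, h21, h41, h12, h14, ha⟩ := basic_facts u hu
  have hs : (0:ℝ) < u + u⁻¹ := by nlinarith
  have hs0 : u + u⁻¹ ≠ 0 := hs.ne'
  have hs2 : u + u⁻¹ + 2 ≠ 0 := by nlinarith
  rw [Kc, Bc, Cc]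
  field_simp
  ring

lemma key_integral (u : ℝ) (hu : 1 < u) :
    (∫ x in (0 : ℝ)..(Real.pi / 2),
        Real.tan x ^ 2 / (1 + (u ^ 2 + (u⁻¹) ^ 2) * Real.tan x ^ 2 + Real.tan x ^ 4)) =
      (Real.pi / 2) * (1 / ((u + u⁻¹) * (u + u⁻¹ + 2))) := by
  obtain ⟨hu0', hv0, hv1, h21, h41, h12, h14, ha⟩ := basic_facts u hu
  have hu0 : (0:ℝ) < u := lt_trans zero_lt_one hu
  set f : ℝ → ℝ := fun x =>
    Real.tan x ^ 2 / (1 + (u ^ 2 + (u⁻¹) ^ 2) * Real.tan x ^ 2 + Real.tan x ^ 4) with hf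
  have hπ : (0:ℝ) < Real.pi / 2 := by positivity
  -- positivity of denominators
  have hdenpos : ∀ s : ℝ, 0 < 1 + (u ^ 2 + (u⁻¹) ^ 2) * s ^ 2 + s ^ 4 := by
    intro s
    have h2 : (0:ℝ) ≤ s ^ 2 := sq_nonneg s
    have h4 : (0:ℝ) ≤ s ^ 4 := by positivity
    nlinarith
  -- integrability
  have hmtan : Measurable Real.tan := by
    have : Real.tan = fun x => Real.sin x / Real.cos x :=
      funext fun x => Real.tan_eq_sin_div_cos x
    rw [this]
    exact Real.measurable_sin.div Real.measurable_cos
  have hmeas : Measurable f := by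
    apply Measurable.div
    · exact hmtan.pow_const 2
    · exact (((hmtan.pow_const 2).const_mul _).const_add 1).add (hmtan.pow_const 4)
  have hbound : ∀ x : ℝ, ‖f x‖ ≤ 1 := by
    intro x
    have hd := hdenpos (Real.tan x)
    have hnum : (0:ℝ) ≤ Real.tan x ^ 2 := sq_nonneg _
    have hfx0 : 0 ≤ f x := div_nonneg hnum hd.le
    have hfx1 : f x ≤ 1 := by
      rw [hf, div_le_one hd]
      nlinarith [sq_nonneg (Real.tan x), sq_nonneg (Real.tan x ^ 2)]
    rw [Real.norm_eq_abs, abs_of_nonneg hfx0]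
    exact hfx1
  have hint : IntervalIntegrable f volume 0 (Real.pi / 2) := by
    rw [intervalIntegrable_iff]
    refine MeasureTheory.Integrable.mono' (g := fun _ => (1:ℝ)) ?_
      hmeas.aestronglyMeasurable (ae_of_all _ hbound)
    rw [uIoc_of_le hπ.le]
    refine MeasureTheory.integrableOn_const ?_ (by simp)
    rw [Real.volume_Ioc]
    exact ENNReal.ofReal_ne_top
  -- derivative
  have hderiv : ∀ x ∈ Ico (0:ℝ) (Real.pi / 2), HasDerivAt (Fa u) (f x) x := by
    intro x hx
    have hcosx : Real.cos x ≠ 0 := by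
      refine (Real.cos_pos_of_mem_Ioo ⟨?_, hx.2⟩).ne'
      have := hx.1
      linarith
    have htan : HasDerivAt Real.tan (1 + Real.tan x ^ 2) x := by
      have h := Real.hasDerivAt_tan hcosx
      have e : 1 / Real.cos x ^ 2 = 1 + Real.tan x ^ 2 := by
        rw [one_div, ← Real.inv_one_add_tan_sq hcosx, inv_inv]
      rwa [e] at h
    have h1 : HasDerivAt (fun y => Real.arctan (Real.tan y / u))
        (1 / (1 + (Real.tan x / u) ^ 2) * ((1 + Real.tan x ^ 2) / u)) x := by
      have := (Real.hasDerivAt_arctan (Real.tan x / u)).comp x (htan.div_const u)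
      simpa [Function.comp_def] using this
    have h2 : HasDerivAt (fun y => Real.arctan (Real.tan y / u⁻¹))
        (1 / (1 + (Real.tan x / u⁻¹) ^ 2) * ((1 + Real.tan x ^ 2) / u⁻¹)) x := by
      have := (Real.hasDerivAt_arctan (Real.tan x / u⁻¹)).comp x (htan.div_const u⁻¹)
      simpa [Function.comp_def] using this
    have hsum := ((hasDerivAt_id x).const_mul (Kc u)).add
      ((h1.const_mul (Bc u)).add (h2.const_mul (Cc u)))
    simp only [hf]
    rw [pf_ident u (Real.tan x) hu]
    exact hsum
  -- FTC on [0, y] for y < π/2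
  have hFTC : ∀ y ∈ Ico (0:ℝ) (Real.pi / 2), (∫ x in (0:ℝ)..y, f x) = Fa u y := by
    intro y hy
    have h1 : ∀ x ∈ uIcc (0:ℝ) y, HasDerivAt (Fa u) (f x) x := by
      intro x hxm
      rw [uIcc_of_le hy.1] at hxm
      exact hderiv x ⟨hxm.1, lt_of_le_of_lt hxm.2 hy.2⟩
    have h2 : IntervalIntegrable f volume 0 y := by
      apply hint.mono_set
      rw [uIcc_of_le hy.1, uIcc_of_le hπ.le]
      exact Icc_subset_Icc le_rfl hy.2.le
    have h3 := intervalIntegral.integral_eq_sub_of_hasDerivAt h1 h2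
    rw [h3]
    simp [Fa, Real.tan_zero, Real.arctan_zero]
  -- limits
  set l : Filter ℝ := 𝓝[Ioo (0:ℝ) (Real.pi / 2)] (Real.pi / 2) with hl
  haveI hlne : l.NeBot := right_nhdsWithin_Ioo_neBot hπ
  have hl1 : l ≤ 𝓝[<] (Real.pi / 2) := nhdsWithin_mono _ fun x hx => hx.2
  have hsubset : Ioo (0:ℝ) (Real.pi / 2) ⊆ uIcc (0:ℝ) (Real.pi / 2) := by
    rw [uIcc_of_le hπ.le]
    exact Ioo_subset_Icc_self
  have t1 : Tendsto (fun y => ∫ x in (0:ℝ)..y, f x) l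
      (𝓝 (∫ x in (0:ℝ)..(Real.pi / 2), f x)) := by
    have hc := intervalIntegral.continuousOn_primitive_interval' hint
      (left_mem_uIcc (a := (0:ℝ)) (b := Real.pi / 2))
    have := (hc (Real.pi / 2) (right_mem_uIcc (a := (0:ℝ)) (b := Real.pi / 2))).tendsto
    exact this.mono_left (nhdsWithin_mono _ hsubset)
  have t2 : Tendsto (Fa u) l
      (𝓝 (Kc u * (Real.pi / 2) +
        (Bc u * (Real.pi / 2) + Cc u * (Real.pi / 2)))) := by
    have ht : Tendsto Real.tan l atTop := Real.tendsto_tan_pi_div_two.mono_left hl1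
    have htu : Tendsto (fun y => Real.tan y / u) l atTop := ht.atTop_div_const hu0
    have htv : Tendsto (fun y => Real.tan y / u⁻¹) l atTop := ht.atTop_div_const hv0
    have hau : Tendsto (fun y => Real.arctan (Real.tan y / u)) l (𝓝 (Real.pi / 2)) :=
      (Real.tendsto_arctan_atTop.mono_right nhdsWithin_le_nhds).comp htu
    have hav : Tendsto (fun y => Real.arctan (Real.tan y / u⁻¹)) l (𝓝 (Real.pi / 2)) :=
      (Real.tendsto_arctan_atTop.mono_right nhdsWithin_le_nhds).comp htv
    have hid : Tendsto (fun y : ℝ => y) l (𝓝 (Real.pi / 2)) :=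
      tendsto_id.mono_right nhdsWithin_le_nhds
    exact ((hid.const_mul (Kc u)).add ((hau.const_mul (Bc u)).add (hav.const_mul (Cc u))))
  have heq : (fun y => ∫ x in (0:ℝ)..y, f x) =ᶠ[l] Fa u := by
    filter_upwards [self_mem_nhdsWithin] with y hy
    exact hFTC y ⟨hy.1.le, hy.2⟩
  have t1' := t1.congr' heq
  have hfinal := tendsto_nhds_unique t1' t2
  rw [hfinal]
  have : Kc u * (Real.pi / 2) + (Bc u * (Real.pi / 2) + Cc u * (Real.pi / 2)) =
      (Kc u + Bc u + Cc u) * (Real.pi / 2) := by ring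
  rw [this, const_ident u hu]
  ring

lemma one_lt_phi : 1 < phi := by
  have h5 : Real.sqrt 5 ^ 2 = 5 := Real.sq_sqrt (by norm_num)
  have h5n : 0 ≤ Real.sqrt 5 := Real.sqrt_nonneg 5
  rw [phi]
  nlinarith

lemma phi_mul_psi : phi * psi = -1 := by
  have h5 : Real.sqrt 5 ^ 2 = 5 := Real.sq_sqrt (by norm_num)
  rw [phi, psi]
  nlinarith

theorem stmt15 (r : ℤ) (hr : 0 < r) :
    (Odd r →
      ∫ x in (0 : ℝ)..(Real.pi / 2),
          Real.tan x ^ 2 / (1 + lucR (2 * r) * Real.tan x ^ 2 + Real.tan x ^ 4) =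
        (Real.pi / 2) * (1 / (Real.sqrt 5 * fibR r * (Real.sqrt 5 * fibR r + 2)))) ∧
    (Even r →
      ∫ x in (0 : ℝ)..(Real.pi / 2),
          Real.tan x ^ 2 / (1 + lucR (2 * r) * Real.tan x ^ 2 + Real.tan x ^ 4) =
        (Real.pi / 2) * (1 / (lucR r * (lucR r + 2)))) := by
  have h1phi : 1 < phi := one_lt_phi
  have hu : 1 < phi ^ r := one_lt_zpow₀ h1phi hr
  have hinv : (phi ^ r)⁻¹ = (-psi) ^ r := by
    rw [← inv_zpow]
    congr 1
    exact inv_eq_of_mul_eq_one_right (by rw [mul_neg, phi_mul_psi]; ring)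
  have hpow2 : ∀ y : ℝ, y ^ (2 * r) = (y ^ r) ^ 2 := by
    intro y
    rw [mul_comm, zpow_mul, zpow_two, sq]
  constructor
  · intro ho
    have hnp : (-psi) ^ r = -psi ^ r := Odd.neg_zpow ho psi
    have hL2 : lucR (2 * r) = (phi ^ r) ^ 2 + ((phi ^ r)⁻¹) ^ 2 := by
      rw [lucR, hinv, hnp, neg_sq, hpow2, hpow2]
    have hS : Real.sqrt 5 * fibR r = phi ^ r + (phi ^ r)⁻¹ := by
      rw [fibR, hinv, hnp]
      have h5 : Real.sqrt 5 ≠ 0 := by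
        have : (0:ℝ) < Real.sqrt 5 := Real.sqrt_pos.2 (by norm_num)
        exact this.ne'
      field_simp
      ring
    rw [hL2, hS]
    exact key_integral (phi ^ r) hu
  · intro he
    have hnp : (-psi) ^ r = psi ^ r := Even.neg_zpow he psi
    have hL2 : lucR (2 * r) = (phi ^ r) ^ 2 + ((phi ^ r)⁻¹) ^ 2 := by
      rw [lucR, hinv, hnp, hpow2, hpow2]
    have hS : lucR r = phi ^ r + (phi ^ r)⁻¹ := by
      rw [lucR, hinv, hnp]
    rw [hL2, hS]
    exact key_integral (phi ^ r) hu
end
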